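/- Let S(t) be the free rBO propagator on 2π-periodic functions, (S(t)φ)^(n) = e^{-int/(1+|n|)} φ̂(n), and let Λ be defined by (Λu)^(n) = (1+|n|)^{-1} û(n). For φ(x) = N^{-s} cos(Nx) with N ∈ ℕ, the bilinear Duhamel term ψ(x,t) = ∫₀ᵗ S(t-τ)Λ[S(τ)φ·(S(τ)φ)ₓ] dτ equals (1/2)N^{-2s+1} (γ_N(1+2N))^{-1} [cos(2Nx - (2N/(1+2N))t) - cos(2Nx - (2N/(1+N))t)], where γ_N = 2N²/((1+N)(1+2N)). -/
import Mathlib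


/-!
Explicit computation of the bilinear Duhamel term for the periodic rBO
propagator.  On the Fourier side (2π-periodic functions), the free propagator
is (S(t)φ)^(n) = e^{-i p(n) t} φ̂(n) with p(n) = n/(1+|n|), Λ has multiplier
(1+|n|)⁻¹, and
  ψ(x,t) = ∫₀ᵗ S(t-τ) Λ[S(τ)φ · (S(τ)φ)ₓ] dτ
has n-th Fourier coefficient
  ∫₀ᵗ e^{-i p(n)(t-τ)} (1+|n|)⁻¹ Σ_m e^{-ip(m)τ}φ̂(m) · i(n-m) e^{-ip(n-m)τ}φ̂(n-m) dτ.
For φ(x) = N^{-s} cos(Nx), i.e. φ̂(±N) = N^{-s}/2, the claim is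
  ψ(x,t) = (1/2) N^{-2s+1} (γ_N(1+2N))⁻¹
             [cos(2Nx − (2N/(1+2N)) t) − cos(2Nx − (2N/(1+N)) t)],
with γ_N = 2N²/((1+N)(1+2N)).
-/

open MeasureTheory

/-- The dispersion `p(n) = n/(1+|n|)`. -/
noncomputable def pm (n : ℤ) : ℝ := (n : ℝ) / (1 + |(n : ℝ)|)

/-- The `n`-th Fourier coefficient of the bilinear Duhamel term
`∫₀ᵗ S(t-τ) Λ[S(τ)φ · (S(τ)φ)ₓ] dτ`, for a datum with Fourier coefficients `a`. -/
noncomputable def duhamelCoef (a : ℤ → ℂ) (t : ℝ) (n : ℤ) : ℂ :=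
  ∫ τ in (0:ℝ)..t,
    Complex.exp (-Complex.I * (pm n : ℂ) * ((t : ℂ) - (τ : ℂ))) * ((1 + |(n : ℝ)| : ℝ) : ℂ)⁻¹ *
      ∑' m : ℤ, (Complex.exp (-Complex.I * (pm m : ℂ) * (τ : ℂ)) * a m) *
        (Complex.I * ((n - m : ℤ) : ℂ)) *
          (Complex.exp (-Complex.I * (pm (n - m) : ℂ) * (τ : ℂ)) * a (n - m))

/-- Fourier coefficients of `φ(x) = N^{-s} cos (N x)`. -/
noncomputable def cosCoef (s : ℝ) (N : ℕ) : ℤ → ℂ := fun k =>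
  if k = (N : ℤ) ∨ k = -(N : ℤ) then (((N : ℝ) ^ (-s) / 2 : ℝ) : ℂ) else 0

/-- `γ_N = 2N²/((1+N)(1+2N))`. -/
noncomputable def γN (N : ℕ) : ℝ := 2 * (N : ℝ) ^ 2 / ((1 + (N : ℝ)) * (1 + 2 * (N : ℝ)))

lemma pm_natCast (n : ℕ) : pm (n : ℤ) = (n : ℝ) / (1 + n) := by
  simp [pm, abs_of_nonneg (n.cast_nonneg : (0:ℝ) ≤ n)]

lemma pm_twoN (N : ℕ) : pm (2 * (N : ℤ)) = 2 * N / (1 + 2 * N) := by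
  have h : (0:ℝ) ≤ 2 * N := by positivity
  simp only [pm]
  push_cast
  rw [abs_of_nonneg h]

lemma pm_neg' (n : ℤ) : pm (-n) = - pm n := by
  simp [pm, neg_div]

lemma two_cos (θ : ℝ) :
    Complex.exp (Complex.I * θ) + Complex.exp (-(Complex.I * θ)) = 2 * (Real.cos θ : ℂ) := by
  rw [show (Complex.I * (θ:ℂ)) = (θ:ℂ) * Complex.I by ring, Complex.exp_mul_I,
    ← neg_mul, Complex.exp_mul_I, Complex.cos_neg, Complex.sin_neg, ← Complex.ofReal_cos]
  ring

lemma cosCoef_zero {s : ℝ} {N : ℕ} {k : ℤ} (h1 : k ≠ (N:ℤ)) (h2 : k ≠ -(N:ℤ)) :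
    cosCoef s N k = 0 := by
  simp [cosCoef, h1, h2]

lemma inner_pos (s : ℝ) (N : ℕ) (hN : 1 ≤ N) (τ : ℝ) :
    (∑' m : ℤ, (Complex.exp (-Complex.I * (pm m : ℂ) * (τ : ℂ)) * cosCoef s N m) *
        (Complex.I * ((2*(N:ℤ) - m : ℤ) : ℂ)) *
          (Complex.exp (-Complex.I * (pm (2*(N:ℤ) - m) : ℂ) * (τ : ℂ)) * cosCoef s N (2*(N:ℤ) - m)))
    = Complex.exp (-Complex.I * ((2 * pm (N:ℤ) : ℝ) : ℂ) * τ) * (Complex.I * (N:ℂ)) *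
        (((N : ℝ) ^ (-s) / 2 : ℝ) : ℂ)^2 := by
  rw [tsum_eq_single (N:ℤ) ?_]
  · have h1 : (2*(N:ℤ) - N) = (N:ℤ) := by ring
    rw [h1]
    have h2 : cosCoef s N (N:ℤ) = (((N : ℝ) ^ (-s) / 2 : ℝ) : ℂ) := by simp [cosCoef]
    rw [h2]
    have h3 : Complex.exp (-Complex.I * ((2 * pm (N:ℤ) : ℝ) : ℂ) * τ)
        = Complex.exp (-Complex.I * (pm (N:ℤ) : ℂ) * τ) *
          Complex.exp (-Complex.I * (pm (N:ℤ) : ℂ) * τ) := by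
      rw [← Complex.exp_add]; push_cast; ring_nf
    rw [h3]; push_cast; ring
  · intro m hm
    by_cases hm' : m = -(N:ℤ)
    · subst hm'
      have : cosCoef s N (2*(N:ℤ) - -(N:ℤ)) = 0 := by
        apply cosCoef_zero <;> omega
      rw [this]; ring
    · rw [cosCoef_zero hm hm']; ring

lemma inner_neg (s : ℝ) (N : ℕ) (hN : 1 ≤ N) (τ : ℝ) :
    (∑' m : ℤ, (Complex.exp (-Complex.I * (pm m : ℂ) * (τ : ℂ)) * cosCoef s N m) *
        (Complex.I * ((-(2*(N:ℤ)) - m : ℤ) : ℂ)) *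
          (Complex.exp (-Complex.I * (pm (-(2*(N:ℤ)) - m) : ℂ) * (τ : ℂ)) * cosCoef s N (-(2*(N:ℤ)) - m)))
    = Complex.exp (Complex.I * ((2 * pm (N:ℤ) : ℝ) : ℂ) * τ) * (-Complex.I * (N:ℂ)) *
        (((N : ℝ) ^ (-s) / 2 : ℝ) : ℂ)^2 := by
  rw [tsum_eq_single (-(N:ℤ)) ?_]
  · have h1 : (-(2*(N:ℤ)) - -(N:ℤ)) = -(N:ℤ) := by ring
    rw [h1]
    have h2 : cosCoef s N (-(N:ℤ)) = (((N : ℝ) ^ (-s) / 2 : ℝ) : ℂ) := by simp [cosCoef]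
    rw [h2, pm_neg']
    have h3 : Complex.exp (Complex.I * ((2 * pm (N:ℤ) : ℝ) : ℂ) * τ)
        = Complex.exp (-Complex.I * ((-pm (N:ℤ) : ℝ) : ℂ) * τ) *
          Complex.exp (-Complex.I * ((-pm (N:ℤ) : ℝ) : ℂ) * τ) := by
      rw [← Complex.exp_add]; push_cast; ring_nf
    rw [h3]; push_cast; ring
  · intro m hm
    by_cases hm' : m = (N:ℤ)
    · subst hm'
      have : cosCoef s N (-(2*(N:ℤ)) - (N:ℤ)) = 0 := by
        apply cosCoef_zero <;> omega
      rw [this]; ring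
    · rw [cosCoef_zero hm' hm]; ring

lemma inner_other (s : ℝ) (N : ℕ) (hN : 1 ≤ N) (n : ℤ) (τ : ℝ)
    (h1 : n ≠ 2*(N:ℤ)) (h2 : n ≠ -(2*(N:ℤ))) :
    (∑' m : ℤ, (Complex.exp (-Complex.I * (pm m : ℂ) * (τ : ℂ)) * cosCoef s N m) *
        (Complex.I * ((n - m : ℤ) : ℂ)) *
          (Complex.exp (-Complex.I * (pm (n - m) : ℂ) * (τ : ℂ)) * cosCoef s N (n - m)))
    = 0 := by
  by_cases h0 : n = 0
  · subst h0
    rw [tsum_eq_sum (s := {(N:ℤ), -(N:ℤ)}) ?_]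
    · rw [Finset.sum_pair (by omega : (N:ℤ) ≠ -(N:ℤ))]
      have e1 : (0 : ℤ) - (N:ℤ) = -(N:ℤ) := by ring
      have e2 : (0 : ℤ) - -(N:ℤ) = (N:ℤ) := by ring
      rw [e1, e2]
      have h2 : cosCoef s N (N:ℤ) = (((N : ℝ) ^ (-s) / 2 : ℝ) : ℂ) := by simp [cosCoef]
      have h2' : cosCoef s N (-(N:ℤ)) = (((N : ℝ) ^ (-s) / 2 : ℝ) : ℂ) := by simp [cosCoef]
      rw [h2, h2', pm_neg']
      push_cast
      ring
    · intro m hm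
      simp only [Finset.mem_insert, Finset.mem_singleton, not_or] at hm
      rw [cosCoef_zero hm.1 hm.2]; ring
  · have key : ∀ m : ℤ,
        (Complex.exp (-Complex.I * (pm m : ℂ) * (τ : ℂ)) * cosCoef s N m) *
        (Complex.I * ((n - m : ℤ) : ℂ)) *
          (Complex.exp (-Complex.I * (pm (n - m) : ℂ) * (τ : ℂ)) * cosCoef s N (n - m)) = 0 := by
      intro m
      by_cases hm : m = (N:ℤ) ∨ m = -(N:ℤ)
      · have : cosCoef s N (n - m) = 0 := by
          apply cosCoef_zero <;> omega
        rw [this]; ring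
      · push_neg at hm
        rw [cosCoef_zero hm.1 hm.2]; ring
    calc (∑' m : ℤ, (Complex.exp (-Complex.I * (pm m : ℂ) * (τ : ℂ)) * cosCoef s N m) *
        (Complex.I * ((n - m : ℤ) : ℂ)) *
          (Complex.exp (-Complex.I * (pm (n - m) : ℂ) * (τ : ℂ)) * cosCoef s N (n - m)))
        = ∑' _ : ℤ, (0:ℂ) := tsum_congr key
      _ = 0 := tsum_zero

example : True := trivial

lemma gamma_eq (N : ℕ) (hN : 1 ≤ N) : 2 * pm (N:ℤ) - pm (2*(N:ℤ)) = γN N := by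
  have hN0 : (0:ℝ) < N := by exact_mod_cast hN
  rw [pm_natCast, pm_twoN]
  unfold γN
  have h1 : (0:ℝ) < 1 + N := by linarith
  have h2 : (0:ℝ) < 1 + 2*N := by linarith
  field_simp
  ring

lemma gamma_pos (N : ℕ) (hN : 1 ≤ N) : 0 < γN N := by
  have hN0 : (0:ℝ) < N := by exact_mod_cast hN
  unfold γN
  positivity

lemma duh_other (s : ℝ) (N : ℕ) (hN : 1 ≤ N) (t : ℝ) (n : ℤ)
    (h1 : n ≠ 2*(N:ℤ)) (h2 : n ≠ -(2*(N:ℤ))) :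
    duhamelCoef (cosCoef s N) t n = 0 := by
  unfold duhamelCoef
  have key := fun τ : ℝ => inner_other s N hN n τ h1 h2
  simp only [key, mul_zero]
  simp

lemma duh_pos (s : ℝ) (N : ℕ) (hN : 1 ≤ N) (t : ℝ) :
    duhamelCoef (cosCoef s N) t (2*(N:ℤ))
      = (((N:ℝ) * ((N : ℝ) ^ (-s) / 2)^2 / (γN N * (1 + 2 * (N:ℝ))) : ℝ) : ℂ) *
        (Complex.exp (-Complex.I * ((pm (2*(N:ℤ)) : ℝ) : ℂ) * t)
          - Complex.exp (-Complex.I * ((2 * pm (N:ℤ) : ℝ) : ℂ) * t)) := by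
  have hN0 : (0:ℝ) < N := by exact_mod_cast hN
  have hγpos := gamma_pos N hN
  have habs : |((2*(N:ℤ) : ℤ) : ℝ)| = 2 * (N:ℝ) := by
    push_cast; rw [abs_of_nonneg (by positivity)]
  have hγC : ((γN N : ℝ) : ℂ) = 2*((pm (N:ℤ) : ℝ):ℂ) - ((pm (2*(N:ℤ)) : ℝ):ℂ) := by
    rw [← gamma_eq N hN]; push_cast; ring
  unfold duhamelCoef
  simp only [inner_pos s N hN, habs]
  have hpoint : ∀ τ : ℝ,
      Complex.exp (-Complex.I * ((pm (2*(N:ℤ)) : ℝ) : ℂ) * ((t : ℂ) - (τ : ℂ))) *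
          ((1 + 2 * (N:ℝ) : ℝ) : ℂ)⁻¹ *
        (Complex.exp (-Complex.I * ((2 * pm (N:ℤ) : ℝ) : ℂ) * τ) * (Complex.I * (N:ℂ)) *
          (((N : ℝ) ^ (-s) / 2 : ℝ) : ℂ)^2)
      = (Complex.exp (-Complex.I * ((pm (2*(N:ℤ)) : ℝ) : ℂ) * t) *
          ((1 + 2 * (N:ℝ) : ℝ) : ℂ)⁻¹ * (Complex.I * (N:ℂ)) *
            (((N : ℝ) ^ (-s) / 2 : ℝ) : ℂ)^2) *
          Complex.exp ((-Complex.I * ((γN N : ℝ) : ℂ)) * τ) := by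
    intro τ
    have hE : Complex.exp (-Complex.I * ((pm (2*(N:ℤ)) : ℝ) : ℂ) * ((t : ℂ) - (τ : ℂ))) *
        Complex.exp (-Complex.I * ((2 * pm (N:ℤ) : ℝ) : ℂ) * τ)
        = Complex.exp (-Complex.I * ((pm (2*(N:ℤ)) : ℝ) : ℂ) * t) *
          Complex.exp ((-Complex.I * ((γN N : ℝ) : ℂ)) * τ) := by
      rw [← Complex.exp_add, ← Complex.exp_add]; congr 1; rw [hγC]; push_cast; ring
    linear_combination ((1 + 2 * (N:ℝ) : ℝ) : ℂ)⁻¹ * (Complex.I * (N:ℂ)) *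
      (((N : ℝ) ^ (-s) / 2 : ℝ) : ℂ)^2 * hE
  simp only [hpoint]
  have hγne : ((γN N : ℝ) : ℂ) ≠ 0 := by exact_mod_cast hγpos.ne'
  have hc : (-Complex.I * ((γN N : ℝ) : ℂ)) ≠ 0 :=
    mul_ne_zero (neg_ne_zero.mpr Complex.I_ne_zero) hγne
  rw [intervalIntegral.integral_const_mul, integral_exp_mul_complex hc]
  have hE2 : Complex.exp ((-Complex.I * ((γN N : ℝ) : ℂ)) * t) *
      Complex.exp (-Complex.I * ((pm (2*(N:ℤ)) : ℝ) : ℂ) * t)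
      = Complex.exp (-Complex.I * ((2 * pm (N:ℤ) : ℝ) : ℂ) * t) := by
    rw [← Complex.exp_add]; congr 1; rw [hγC]; push_cast; ring
  have h1 : ((1 + 2 * (N:ℝ) : ℝ) : ℂ) ≠ 0 := by
    exact_mod_cast (by positivity : (0:ℝ) < 1 + 2*(N:ℝ)).ne'
  simp only [Complex.ofReal_zero, mul_zero, Complex.exp_zero]
  rw [← hE2]
  simp only [div_eq_mul_inv, inv_neg, mul_inv, Complex.inv_I]
  push_cast
  linear_combination (Complex.exp (-Complex.I * ((pm (2*(N:ℤ)) : ℝ) : ℂ) * t) *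
    ((1:ℂ) + 2*(N:ℂ))⁻¹ * (N:ℂ) * ((((N:ℝ)^(-s) : ℝ) : ℂ)/2)^2 *
    (Complex.exp ((-Complex.I * ((γN N : ℝ) : ℂ)) * t) - 1) *
    (((γN N : ℝ) : ℂ))⁻¹) * Complex.I_sq

lemma duh_neg (s : ℝ) (N : ℕ) (hN : 1 ≤ N) (t : ℝ) :
    duhamelCoef (cosCoef s N) t (-(2*(N:ℤ)))
      = (((N:ℝ) * ((N : ℝ) ^ (-s) / 2)^2 / (γN N * (1 + 2 * (N:ℝ))) : ℝ) : ℂ) *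
        (Complex.exp (Complex.I * ((pm (2*(N:ℤ)) : ℝ) : ℂ) * t)
          - Complex.exp (Complex.I * ((2 * pm (N:ℤ) : ℝ) : ℂ) * t)) := by
  have hN0 : (0:ℝ) < N := by exact_mod_cast hN
  have hγpos := gamma_pos N hN
  have habs : |((-(2*(N:ℤ)) : ℤ) : ℝ)| = 2 * (N:ℝ) := by
    push_cast; rw [abs_neg, abs_of_nonneg (by positivity)]
  have hpm : ((pm (-(2*(N:ℤ))) : ℝ) : ℂ) = -((pm (2*(N:ℤ)) : ℝ) : ℂ) := by
    rw [pm_neg']; push_cast; ring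
  have hγC : ((γN N : ℝ) : ℂ) = 2*((pm (N:ℤ) : ℝ):ℂ) - ((pm (2*(N:ℤ)) : ℝ):ℂ) := by
    rw [← gamma_eq N hN]; push_cast; ring
  unfold duhamelCoef
  simp only [inner_neg s N hN, habs, hpm]
  have hpoint : ∀ τ : ℝ,
      Complex.exp (-Complex.I * -((pm (2*(N:ℤ)) : ℝ) : ℂ) * ((t : ℂ) - (τ : ℂ))) *
          ((1 + 2 * (N:ℝ) : ℝ) : ℂ)⁻¹ *
        (Complex.exp (Complex.I * ((2 * pm (N:ℤ) : ℝ) : ℂ) * τ) * (-Complex.I * (N:ℂ)) *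
          (((N : ℝ) ^ (-s) / 2 : ℝ) : ℂ)^2)
      = (Complex.exp (Complex.I * ((pm (2*(N:ℤ)) : ℝ) : ℂ) * t) *
          ((1 + 2 * (N:ℝ) : ℝ) : ℂ)⁻¹ * (-Complex.I * (N:ℂ)) *
            (((N : ℝ) ^ (-s) / 2 : ℝ) : ℂ)^2) *
          Complex.exp ((Complex.I * ((γN N : ℝ) : ℂ)) * τ) := by
    intro τ
    have hE : Complex.exp (-Complex.I * -((pm (2*(N:ℤ)) : ℝ) : ℂ) * ((t : ℂ) - (τ : ℂ))) *
        Complex.exp (Complex.I * ((2 * pm (N:ℤ) : ℝ) : ℂ) * τ)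
        = Complex.exp (Complex.I * ((pm (2*(N:ℤ)) : ℝ) : ℂ) * t) *
          Complex.exp ((Complex.I * ((γN N : ℝ) : ℂ)) * τ) := by
      rw [← Complex.exp_add, ← Complex.exp_add]; congr 1; rw [hγC]; push_cast; ring
    linear_combination ((1 + 2 * (N:ℝ) : ℝ) : ℂ)⁻¹ * (-Complex.I * (N:ℂ)) *
      (((N : ℝ) ^ (-s) / 2 : ℝ) : ℂ)^2 * hE
  simp only [hpoint]
  have hγne : ((γN N : ℝ) : ℂ) ≠ 0 := by exact_mod_cast hγpos.ne'
  have hc : (Complex.I * ((γN N : ℝ) : ℂ)) ≠ 0 := mul_ne_zero Complex.I_ne_zero hγne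
  rw [intervalIntegral.integral_const_mul, integral_exp_mul_complex hc]
  have hE2 : Complex.exp ((Complex.I * ((γN N : ℝ) : ℂ)) * t) *
      Complex.exp (Complex.I * ((pm (2*(N:ℤ)) : ℝ) : ℂ) * t)
      = Complex.exp (Complex.I * ((2 * pm (N:ℤ) : ℝ) : ℂ) * t) := by
    rw [← Complex.exp_add]; congr 1; rw [hγC]; push_cast; ring
  have h1 : ((1 + 2 * (N:ℝ) : ℝ) : ℂ) ≠ 0 := by
    exact_mod_cast (by positivity : (0:ℝ) < 1 + 2*(N:ℝ)).ne'
  simp only [Complex.ofReal_zero, mul_zero, Complex.exp_zero]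
  rw [← hE2]
  simp only [div_eq_mul_inv, inv_neg, mul_inv, Complex.inv_I]
  push_cast
  linear_combination (Complex.exp (Complex.I * ((pm (2*(N:ℤ)) : ℝ) : ℂ) * t) *
    ((1:ℂ) + 2*(N:ℂ))⁻¹ * (N:ℂ) * ((((N:ℝ)^(-s) : ℝ) : ℂ)/2)^2 *
    (Complex.exp ((Complex.I * ((γN N : ℝ) : ℂ)) * t) - 1) *
    (((γN N : ℝ) : ℂ))⁻¹) * Complex.I_sq

/-- **Explicit form of the bilinear Duhamel term** for `φ(x) = N^{-s} cos(Nx)`. -/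
theorem duhamel_term_explicit (s : ℝ) (N : ℕ) (hN : 1 ≤ N) (t x : ℝ) :
    (∑' n : ℤ, duhamelCoef (cosCoef s N) t n * Complex.exp (Complex.I * (n : ℂ) * (x : ℂ)))
      = (((1 / 2) * (N : ℝ) ^ (-2 * s + 1) * (γN N * (1 + 2 * (N : ℝ)))⁻¹ *
          (Real.cos (2 * N * x - (2 * N / (1 + 2 * (N : ℝ))) * t)
            - Real.cos (2 * N * x - (2 * N / (1 + (N : ℝ))) * t)) : ℝ) : ℂ) := by
  have hN0 : (0:ℝ) < N := by exact_mod_cast hN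
  have hγpos := gamma_pos N hN
  rw [tsum_eq_sum (s := {(2*(N:ℤ)), -(2*(N:ℤ))}) (by
    intro n hn
    simp only [Finset.mem_insert, Finset.mem_singleton, not_or] at hn
    rw [duh_other s N hN t n hn.1 hn.2, zero_mul])]
  rw [Finset.sum_pair (by omega : (2*(N:ℤ)) ≠ -(2*(N:ℤ)))]
  rw [duh_pos s N hN t, duh_neg s N hN t]
  set θ1 : ℝ := 2 * N * x - (2 * N / (1 + 2 * (N : ℝ))) * t with hθ1
  set θ2 : ℝ := 2 * N * x - (2 * N / (1 + (N : ℝ))) * t with hθ2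
  have hp2C : ((pm (2*(N:ℤ)) : ℝ) : ℂ) = ((2 * N / (1 + 2 * (N:ℝ)) : ℝ) : ℂ) := by
    rw [pm_twoN]
  have hp1C : ((2 * pm (N:ℤ) : ℝ) : ℂ) = ((2 * N / (1 + (N:ℝ)) : ℝ) : ℂ) := by
    rw [pm_natCast]; push_cast; ring
  have h1 : Complex.exp (-Complex.I * ((pm (2*(N:ℤ)) : ℝ) : ℂ) * t) *
      Complex.exp (Complex.I * ((2*(N:ℤ) : ℤ) : ℂ) * x) = Complex.exp (Complex.I * (θ1 : ℂ)) := by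
    rw [← Complex.exp_add]; congr 1; rw [hp2C, hθ1]; push_cast; ring
  have h2 : Complex.exp (-Complex.I * ((2 * pm (N:ℤ) : ℝ) : ℂ) * t) *
      Complex.exp (Complex.I * ((2*(N:ℤ) : ℤ) : ℂ) * x) = Complex.exp (Complex.I * (θ2 : ℂ)) := by
    rw [← Complex.exp_add]; congr 1; rw [hp1C, hθ2]; push_cast; ring
  have h3 : Complex.exp (Complex.I * ((pm (2*(N:ℤ)) : ℝ) : ℂ) * t) *
      Complex.exp (Complex.I * ((-(2*(N:ℤ)) : ℤ) : ℂ) * x) = Complex.exp (-(Complex.I * (θ1 : ℂ))) := by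
    rw [← Complex.exp_add]; congr 1; rw [hp2C, hθ1]; push_cast; ring
  have h4 : Complex.exp (Complex.I * ((2 * pm (N:ℤ) : ℝ) : ℂ) * t) *
      Complex.exp (Complex.I * ((-(2*(N:ℤ)) : ℤ) : ℂ) * x) = Complex.exp (-(Complex.I * (θ2 : ℂ))) := by
    rw [← Complex.exp_add]; congr 1; rw [hp1C, hθ2]; push_cast; ring
  have tc1 := two_cos θ1
  have tc2 := two_cos θ2
  have hK : (1 / 2) * (N : ℝ) ^ (-2 * s + 1) * (γN N * (1 + 2 * (N : ℝ)))⁻¹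
      = 2 * ((N:ℝ) * ((N : ℝ) ^ (-s) / 2)^2 / (γN N * (1 + 2 * (N:ℝ)))) := by
    have e1 : (N:ℝ)^(-2*s+1) = (N:ℝ)^(-2*s) * N := by
      rw [Real.rpow_add hN0, Real.rpow_one]
    have e2 : (N:ℝ)^(-2*s) = ((N:ℝ)^(-s))^2 := by
      rw [show (-2*s) = (-s)*2 by ring, Real.rpow_mul hN0.le,
        show ((2:ℝ)) = ((2:ℕ):ℝ) by norm_num, Real.rpow_natCast]
    rw [e1, e2]
    have hA : (0:ℝ) < 1 + 2*(N:ℝ) := by positivity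
    field_simp
  have goalK : (((N:ℝ) * ((N : ℝ) ^ (-s) / 2)^2 / (γN N * (1 + 2 * (N:ℝ))) : ℝ) : ℂ) *
        (2 * ((Real.cos θ1 : ℝ) : ℂ) - 2 * ((Real.cos θ2 : ℝ) : ℂ))
      = (((1 / 2) * (N : ℝ) ^ (-2 * s + 1) * (γN N * (1 + 2 * (N : ℝ)))⁻¹ *
          (Real.cos θ1 - Real.cos θ2) : ℝ) : ℂ) := by
    rw [hK]; push_cast; ring
  calc (((N:ℝ) * ((N : ℝ) ^ (-s) / 2)^2 / (γN N * (1 + 2 * (N:ℝ))) : ℝ) : ℂ) *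
        (Complex.exp (-Complex.I * ((pm (2*(N:ℤ)) : ℝ) : ℂ) * t)
          - Complex.exp (-Complex.I * ((2 * pm (N:ℤ) : ℝ) : ℂ) * t)) *
        Complex.exp (Complex.I * ((2*(N:ℤ) : ℤ) : ℂ) * x)
      + (((N:ℝ) * ((N : ℝ) ^ (-s) / 2)^2 / (γN N * (1 + 2 * (N:ℝ))) : ℝ) : ℂ) *
        (Complex.exp (Complex.I * ((pm (2*(N:ℤ)) : ℝ) : ℂ) * t)
          - Complex.exp (Complex.I * ((2 * pm (N:ℤ) : ℝ) : ℂ) * t)) *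
        Complex.exp (Complex.I * ((-(2*(N:ℤ)) : ℤ) : ℂ) * x)
      = (((N:ℝ) * ((N : ℝ) ^ (-s) / 2)^2 / (γN N * (1 + 2 * (N:ℝ))) : ℝ) : ℂ) *
        (2 * ((Real.cos θ1 : ℝ) : ℂ) - 2 * ((Real.cos θ2 : ℝ) : ℂ)) := by
        linear_combination
          (((N:ℝ) * ((N : ℝ) ^ (-s) / 2)^2 / (γN N * (1 + 2 * (N:ℝ))) : ℝ) : ℂ) *
            (h1 - h2 + h3 - h4 + tc1 - tc2)
    _ = _ := goalK
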